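/- If C ≥ 0 is such that for every n ∈ ℕ and all independent random variables X_1,…,X_n with E X_k = 0, E X_k² < ∞ and B_n² = Σ_k E X_k² > 0 one has Δ_n ≤ C·( |M_n(1)| + sup_{0<z<1} max{z,1}·L_n(z) ), then C ≥ sup_{1/2<p<1} ( Φ(√((1−p)/p)) − (1−p) ) / ( 1 + √((1−p)³/p) ), and in particular C > 0.5370. -/

import Mathlib

/-! A single centred two-point summand already forces the bound. Let `X = √(q/p)` with
probability `p` and `X = -√(p/q)` with probability `q = 1 - p`, where `1/2 < p < 1`. Then
`E X = 0`, `E X² = 1` and `P(X < √(q/p)) = q`, so `Δ₁ ≥ Φ(√(q/p)) - q`; the truncation at level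
`1` keeps only the upper atom, so `M₁(1) = p (q/p)^{3/2} = √(q³/p)`; and the weighted Lindeberg
supremum is exactly `1`, attained at `z = √(q/p) < 1`. Hence `C ≥ (Φ(√(q/p)) - q) / (1 + √(q³/p))`.
At `p = 0.9678` the Taylor bound `Φ(x) ≥ 1/2 + (x - x³/6)/√(2π)` makes this ratio exceed
`0.5370`. -/

open MeasureTheory ProbabilityTheory Real Set

/-- The standard normal distribution function. -/
noncomputable def Phi (x : ℝ) : ℝ :=
  ∫ t in Set.Iic x, Real.exp (-t ^ 2 / 2) / Real.sqrt (2 * Real.pi)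

/-- `B_n = sqrt (Σ E X_k²)`. -/
noncomputable def Bn {Ω : Type} [MeasurableSpace Ω] (μ : Measure Ω) {n : ℕ}
    (X : Fin n → Ω → ℝ) : ℝ :=
  Real.sqrt (∑ k, ∫ ω, (X k ω) ^ 2 ∂μ)

/-- Uniform distance between the d.f. of the normalized sum and the standard normal d.f. -/
noncomputable def Deltan {Ω : Type} [MeasurableSpace Ω] (μ : Measure Ω) {n : ℕ}
    (X : Fin n → Ω → ℝ) : ℝ :=
  ⨆ x : ℝ, |(μ {ω | (∑ k, X k ω) / Bn μ X < x}).toReal - Phi x|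

/-- `M_n(z) = B_n⁻³ Σ E[X_k³ 1_{|X_k| < z B_n}]`. -/
noncomputable def Mn {Ω : Type} [MeasurableSpace Ω] (μ : Measure Ω) {n : ℕ}
    (X : Fin n → Ω → ℝ) (z : ℝ) : ℝ :=
  (∑ k, ∫ ω, (if |X k ω| < z * Bn μ X then (X k ω) ^ 3 else 0) ∂μ) / (Bn μ X) ^ 3

/-- `L_n(z) = B_n⁻² Σ E[X_k² 1_{|X_k| ≥ z B_n}]` (the Lindeberg fraction). -/
noncomputable def Lnn {Ω : Type} [MeasurableSpace Ω] (μ : Measure Ω) {n : ℕ}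
    (X : Fin n → Ω → ℝ) (z : ℝ) : ℝ :=
  (∑ k, ∫ ω, (if z * Bn μ X ≤ |X k ω| then (X k ω) ^ 2 else 0) ∂μ) / (Bn μ X) ^ 2

/-- Hypotheses on the independent summands: measurability, independence, zero means,
finite second moments, positive total variance. -/
def GoodFamily {Ω : Type} [MeasurableSpace Ω] (μ : Measure Ω) {n : ℕ}
    (X : Fin n → Ω → ℝ) : Prop :=
  (∀ k, Measurable (X k)) ∧
  iIndepFun X μ ∧
  (∀ k, Integrable (fun ω => (X k ω) ^ 2) μ) ∧
  (∀ k, ∫ ω, X k ω ∂μ = 0) ∧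
  0 < ∑ k, ∫ ω, (X k ω) ^ 2 ∂μ

lemma gaussianPDFReal_zero_one :
    gaussianPDFReal 0 1 = fun t => Real.exp (-t ^ 2 / 2) / Real.sqrt (2 * Real.pi) := by
  ext t
  simp [gaussianPDFReal_def, div_eq_inv_mul]

lemma Phi_eq_setIntegral_gaussianPDFReal (x : ℝ) :
    Phi x = ∫ t in Iic x, gaussianPDFReal 0 1 t := by
  rw [gaussianPDFReal_zero_one, Phi]

lemma Phi_eq_cdf (x : ℝ) : Phi x = cdf (gaussianReal 0 1) x := by
  rw [cdf_eq_real, measureReal_def, gaussianReal_apply_eq_integral 0 one_ne_zero,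
    ENNReal.toReal_ofReal (setIntegral_nonneg measurableSet_Iic
      fun t _ => gaussianPDFReal_nonneg 0 1 t), Phi_eq_setIntegral_gaussianPDFReal]

lemma Phi_nonneg (x : ℝ) : 0 ≤ Phi x := Phi_eq_cdf x ▸ cdf_nonneg _ x

lemma Phi_le_one (x : ℝ) : Phi x ≤ 1 := Phi_eq_cdf x ▸ cdf_le_one _ x

lemma monotone_Phi : Monotone Phi := fun a b hab => by
  simpa only [Phi_eq_cdf] using monotone_cdf _ hab

lemma Phi_zero : Phi 0 = 1 / 2 := by
  have hsymm : ∫ t in Ioi 0, gaussianPDFReal 0 1 t = Phi 0 := by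
    have heven : ∀ t, gaussianPDFReal 0 1 (-t) = gaussianPDFReal 0 1 t := fun t => by
      simp [gaussianPDFReal_def]
    simpa only [heven, neg_zero, ← Phi_eq_setIntegral_gaussianPDFReal] using
      integral_comp_neg_Ioi 0 (gaussianPDFReal 0 1)
  have htotal := integral_add_compl (s := Iic 0) measurableSet_Iic (integrable_gaussianPDFReal 0 1)
  rw [compl_Iic, integral_gaussianPDFReal_eq_one 0 one_ne_zero,
    ← Phi_eq_setIntegral_gaussianPDFReal, hsymm] at htotal
  linarith

lemma taylor_cubic_le_Phi {x : ℝ} (hx : 0 ≤ x) :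
    1 / 2 + (x - x ^ 3 / 6) / Real.sqrt (2 * Real.pi) ≤ Phi x := by
  have hsplit : Phi x = Phi 0 + ∫ u in (0)..x, gaussianPDFReal 0 1 u := by
    rw [intervalIntegral.integral_of_le hx, Phi_eq_setIntegral_gaussianPDFReal,
      Phi_eq_setIntegral_gaussianPDFReal, ← setIntegral_union (Iic_disjoint_Ioc le_rfl)
        measurableSet_Ioc (integrable_gaussianPDFReal 0 1).integrableOn
        (integrable_gaussianPDFReal 0 1).integrableOn, Iic_union_Ioc_eq_Iic hx]
  have hpoly : ∫ u in (0)..x, (1 - u ^ 2 / 2) / Real.sqrt (2 * Real.pi)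
      = (x - x ^ 3 / 6) / Real.sqrt (2 * Real.pi) := by
    rw [intervalIntegral.integral_div, intervalIntegral.integral_sub intervalIntegrable_const
      ((by fun_prop : Continuous fun u : ℝ => u ^ 2 / 2).intervalIntegrable _ _),
      intervalIntegral.integral_const, intervalIntegral.integral_div, integral_pow]
    ring
  have hmono : ∫ u in (0)..x, (1 - u ^ 2 / 2) / Real.sqrt (2 * Real.pi)
      ≤ ∫ u in (0)..x, gaussianPDFReal 0 1 u := by
    refine intervalIntegral.integral_mono_on hx (Continuous.intervalIntegrable (by fun_prop) _ _)
      (integrable_gaussianPDFReal 0 1).intervalIntegrable fun u _ => ?_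
    rw [gaussianPDFReal_zero_one]
    dsimp only
    gcongr
    linarith [Real.add_one_le_exp (-u ^ 2 / 2)]
  rw [hsplit, Phi_zero]
  linarith

lemma abs_sub_Phi_le_Deltan {Ω : Type} [MeasurableSpace Ω] (μ : Measure Ω)
    [IsProbabilityMeasure μ] {n : ℕ} (X : Fin n → Ω → ℝ) (x : ℝ) :
    |(μ {ω | (∑ k, X k ω) / Bn μ X < x}).toReal - Phi x| ≤ Deltan μ X := by
  refine le_ciSup (f := fun x => |(μ {ω | (∑ k, X k ω) / Bn μ X < x}).toReal - Phi x|)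
    ⟨1, ?_⟩ x
  rintro _ ⟨y, rfl⟩
  exact abs_sub_le_of_nonneg_of_le ENNReal.toReal_nonneg measureReal_le_one
    (Phi_nonneg y) (Phi_le_one y)

lemma Lnn_le_one {Ω : Type} [MeasurableSpace Ω] (μ : Measure Ω) {n : ℕ} (X : Fin n → Ω → ℝ)
    (hX : ∀ k, Integrable (fun ω => X k ω ^ 2) μ) (z : ℝ) : Lnn μ X z ≤ 1 := by
  have hvar : 0 ≤ ∑ k, ∫ ω, X k ω ^ 2 ∂μ :=
    Finset.sum_nonneg fun k _ => integral_nonneg fun ω => sq_nonneg _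
  rw [Lnn, Bn, sq_sqrt hvar]
  refine div_le_one_of_le₀ (Finset.sum_le_sum fun k _ => integral_mono_of_nonneg
    (ae_of_all _ fun ω => ?_) (hX k) (ae_of_all _ fun ω => ?_)) hvar
  all_goals dsimp only [Pi.zero_apply]; split_ifs <;> simp [sq_nonneg]

lemma mul_sqrt_div_self {a : ℝ} (ha : 0 ≤ a) (b : ℝ) : a * √(b / a) = √(a * b) := by
  calc a * √(b / a) = √(a ^ 2) * √(b / a) := by rw [sqrt_sq ha]
    _ = √(a ^ 2 * (b / a)) := (sqrt_mul (sq_nonneg a) _).symm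
    _ = √(a * b) := by
      rcases ha.eq_or_lt with rfl | ha
      · simp
      · congr 1
        field_simp

noncomputable def twoPointMeasure (p : ℝ) : Measure Bool :=
  ENNReal.ofReal p • Measure.dirac true + ENNReal.ofReal (1 - p) • Measure.dirac false

noncomputable def twoPointVar (p : ℝ) (b : Bool) : ℝ :=
  if b then √((1 - p) / p) else -√(p / (1 - p))

section TwoPoint

variable {p : ℝ}

lemma twoPointMeasure_false_toReal (hp : p ≤ 1) :
    (twoPointMeasure p {false}).toReal = 1 - p := by
  simp [twoPointMeasure, sub_nonneg.2 hp]

lemma isProbabilityMeasure_twoPointMeasure (h0 : 0 ≤ p) (h1 : p ≤ 1) :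
    IsProbabilityMeasure (twoPointMeasure p) :=
  ⟨by simp [twoPointMeasure, ← ENNReal.ofReal_add h0 (sub_nonneg.2 h1)]⟩

lemma integral_twoPointMeasure (h0 : 0 ≤ p) (h1 : p ≤ 1) (f : Bool → ℝ) :
    ∫ b, f b ∂twoPointMeasure p = p * f true + (1 - p) * f false := by
  have := isProbabilityMeasure_twoPointMeasure h0 h1
  rw [integral_fintype Integrable.of_finite]
  simp [Measure.real, twoPointMeasure, h0, sub_nonneg.2 h1]

lemma integral_twoPointVar (hp : p ∈ Ioo 0 1) :
    ∫ b, twoPointVar p b ∂twoPointMeasure p = 0 := by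
  rw [integral_twoPointMeasure hp.1.le hp.2.le]
  simp only [twoPointVar, if_true, Bool.false_eq_true, if_false]
  rw [mul_sqrt_div_self hp.1.le, mul_neg, mul_sqrt_div_self (sub_nonneg.2 hp.2.le), mul_comm p]
  ring

lemma integral_twoPointVar_sq (hp : p ∈ Ioo 0 1) :
    ∫ b, twoPointVar p b ^ 2 ∂twoPointMeasure p = 1 := by
  have hp0 : p ≠ 0 := hp.1.ne'
  have hq : 0 < 1 - p := sub_pos.2 hp.2
  rw [integral_twoPointMeasure hp.1.le hp.2.le]
  simp only [twoPointVar, if_true, Bool.false_eq_true, if_false, neg_sq,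
    sq_sqrt (div_nonneg hq.le hp.1.le), sq_sqrt (div_nonneg hp.1.le hq.le)]
  field_simp
  ring

lemma goodFamily_twoPointVar (hp : p ∈ Ioo 0 1) :
    GoodFamily (twoPointMeasure p) (fun _ : Fin 1 => twoPointVar p) := by
  have := isProbabilityMeasure_twoPointMeasure hp.1.le hp.2.le
  refine ⟨fun _ => measurable_from_top, iIndepFun.of_subsingleton, fun _ => Integrable.of_finite,
    fun _ => integral_twoPointVar hp, ?_⟩
  simp [integral_twoPointVar_sq hp]

lemma Bn_twoPointVar (hp : p ∈ Ioo 0 1) :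
    Bn (twoPointMeasure p) (fun _ : Fin 1 => twoPointVar p) = 1 := by
  simp [Bn, integral_twoPointVar_sq hp]

lemma Phi_sub_le_Deltan_twoPointVar (hp : p ∈ Ioo 0 1) :
    Phi √((1 - p) / p) - (1 - p) ≤ Deltan (twoPointMeasure p) (fun _ : Fin 1 => twoPointVar p) := by
  have := isProbabilityMeasure_twoPointMeasure hp.1.le hp.2.le
  have hs : 0 < √(p / (1 - p)) := sqrt_pos.2 (div_pos hp.1 (sub_pos.2 hp.2))
  have hset : {b | (∑ _ : Fin 1, twoPointVar p b) / Bn (twoPointMeasure p)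
      (fun _ : Fin 1 => twoPointVar p) < √((1 - p) / p)} = {false} := by
    simp only [Fin.sum_univ_one, Bn_twoPointVar hp, div_one]
    ext b
    cases b
    · simpa [twoPointVar] using neg_lt_zero.2 hs |>.trans_le (sqrt_nonneg _)
    · simp [twoPointVar]
  calc Phi √((1 - p) / p) - (1 - p)
      ≤ |(twoPointMeasure p {false}).toReal - Phi √((1 - p) / p)| := by
        rw [twoPointMeasure_false_toReal hp.2.le, abs_sub_comm]
        exact le_abs_self _
    _ ≤ _ := hset ▸ abs_sub_Phi_le_Deltan _ _ _

lemma sqrt_one_sub_div_lt_one (hp : p ∈ Ioo (1 / 2) 1) : √((1 - p) / p) < 1 := by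
  rw [sqrt_lt' one_pos, one_pow, div_lt_one (by linarith [hp.1])]
  linarith [hp.1]

lemma one_le_sqrt_div_one_sub (hp : p ∈ Ioo (1 / 2) 1) : 1 ≤ √(p / (1 - p)) := by
  rw [le_sqrt zero_le_one (div_nonneg (by linarith [hp.1]) (sub_nonneg.2 hp.2.le)), one_pow,
    one_le_div (sub_pos.2 hp.2)]
  linarith [hp.1]

lemma Mn_twoPointVar (hp : p ∈ Ioo (1 / 2) 1) :
    Mn (twoPointMeasure p) (fun _ : Fin 1 => twoPointVar p) 1 = √((1 - p) ^ 3 / p) := by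
  have hp' : p ∈ Ioo 0 1 := Ioo_subset_Ioo_left (by norm_num) hp
  have hp0 : p ≠ 0 := hp'.1.ne'
  have hq : 0 ≤ 1 - p := sub_nonneg.2 hp.2.le
  rw [Mn, Bn_twoPointVar hp', Fin.sum_univ_one, integral_twoPointMeasure hp'.1.le hp.2.le]
  simp only [twoPointVar, if_true, Bool.false_eq_true, if_false, abs_neg,
    abs_of_nonneg (sqrt_nonneg _), one_mul, if_pos (sqrt_one_sub_div_lt_one hp),
    if_neg (not_lt.2 (one_le_sqrt_div_one_sub hp))]
  rw [show (1 - p) ^ 3 / p = (1 - p) ^ 2 * ((1 - p) / p) by ring, sqrt_mul (sq_nonneg _),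
    sqrt_sq hq, pow_succ, ← mul_assoc, sq_sqrt (div_nonneg hq hp'.1.le)]
  field_simp
  ring

lemma Lnn_twoPointVar_self (hp : p ∈ Ioo (1 / 2) 1) :
    Lnn (twoPointMeasure p) (fun _ : Fin 1 => twoPointVar p) √((1 - p) / p) = 1 := by
  have hp' : p ∈ Ioo 0 1 := Ioo_subset_Ioo_left (by norm_num) hp
  have htrunc : (fun b => if √((1 - p) / p) * 1 ≤ |twoPointVar p b| then twoPointVar p b ^ 2
      else 0) = fun b => twoPointVar p b ^ 2 := by
    funext b
    rw [if_pos]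
    cases b <;> simp only [twoPointVar, if_true, Bool.false_eq_true, if_false, abs_neg,
      abs_of_nonneg (sqrt_nonneg _), mul_one, le_refl]
    linarith [sqrt_one_sub_div_lt_one hp, one_le_sqrt_div_one_sub hp]
  simp only [Lnn, Bn_twoPointVar hp', Fin.sum_univ_one, htrunc, integral_twoPointVar_sq hp',
    one_pow, div_one]

lemma sSup_Lnn_twoPointVar (hp : p ∈ Ioo (1 / 2) 1) :
    sSup ((fun z => max z 1 * Lnn (twoPointMeasure p) (fun _ : Fin 1 => twoPointVar p) z) ''
      Ioo 0 1) = 1 := by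
  have hp' : p ∈ Ioo 0 1 := Ioo_subset_Ioo_left (by norm_num) hp
  have ht := sqrt_one_sub_div_lt_one hp
  refine IsGreatest.csSup_eq ⟨⟨√((1 - p) / p), ⟨sqrt_pos.2 (div_pos (sub_pos.2 hp.2) hp'.1), ht⟩,
    by simp only [Lnn_twoPointVar_self hp, max_eq_right ht.le, mul_one]⟩, ?_⟩
  rintro _ ⟨z, hz, rfl⟩
  dsimp only
  rw [max_eq_right hz.2.le, one_mul]
  exact Lnn_le_one _ _ (goodFamily_twoPointVar hp').2.2.1 z

end TwoPoint

def IsRozovskiiConstant (C : ℝ) : Prop :=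
  ∀ (Ω : Type) (_ : MeasurableSpace Ω) (μ : Measure Ω), IsProbabilityMeasure μ →
    ∀ (n : ℕ) (X : Fin n → Ω → ℝ), GoodFamily μ X →
      Deltan μ X ≤ C * (|Mn μ X 1| + sSup ((fun z => max z 1 * Lnn μ X z) '' Ioo (0 : ℝ) 1))

noncomputable def rozovskiiRatio (p : ℝ) : ℝ :=
  (Phi √((1 - p) / p) - (1 - p)) / (1 + √((1 - p) ^ 3 / p))

lemma IsRozovskiiConstant.rozovskiiRatio_le {C p : ℝ} (hC : IsRozovskiiConstant C)
    (hp : p ∈ Ioo (1 / 2) 1) : rozovskiiRatio p ≤ C := by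
  have hp' : p ∈ Ioo 0 1 := Ioo_subset_Ioo_left (by norm_num) hp
  have hbound := hC Bool _ (twoPointMeasure p)
    (isProbabilityMeasure_twoPointMeasure hp'.1.le hp.2.le) 1 _ (goodFamily_twoPointVar hp')
  rw [Mn_twoPointVar hp, sSup_Lnn_twoPointVar hp, abs_of_nonneg (sqrt_nonneg _)] at hbound
  rw [rozovskiiRatio, div_le_iff₀ (by positivity)]
  linarith [Phi_sub_le_Deltan_twoPointVar hp']

lemma sqrt_two_mul_pi_le : √(2 * π) ≤ 2.5067 :=
  sqrt_le_iff.2 ⟨by norm_num, by nlinarith [pi_lt_d4]⟩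

-- Here `√(q/p) ≈ 0.182404`, `√(2π) ≈ 2.506628` and the ratio is `≈ 0.537007`, a margin below `10⁻⁵`.
lemma lt_rozovskiiRatio_at_0_9678 : (0.5370 : ℝ) < rozovskiiRatio 0.9678 := by
  have hPhi : 1 / 2 + (0.1824 - 0.1824 ^ 3 / 6) / 2.5067 ≤ Phi √((1 - 0.9678) / 0.9678) :=
    calc (1 / 2 + (0.1824 - 0.1824 ^ 3 / 6) / 2.5067 : ℝ)
        ≤ 1 / 2 + (0.1824 - 0.1824 ^ 3 / 6) / √(2 * π) := by
          gcongr
          exact sqrt_two_mul_pi_le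
      _ ≤ Phi 0.1824 := taylor_cubic_le_Phi (by norm_num)
      _ ≤ Phi √((1 - 0.9678) / 0.9678) := monotone_Phi (le_sqrt_of_sq_le (by norm_num))
  have hM : √((1 - 0.9678) ^ 3 / 0.9678) ≤ (0.0058735 : ℝ) :=
    sqrt_le_iff.2 ⟨by norm_num, by norm_num⟩
  rw [rozovskiiRatio, lt_div_iff₀ (by positivity)]
  linarith

theorem lower_bound_optimistic_rozovskii_1_1_general (C : ℝ)
    (h : ∀ (Ω : Type) (mΩ : MeasurableSpace Ω) (μ : Measure Ω), IsProbabilityMeasure μ →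
      ∀ (n : ℕ) (X : Fin n → Ω → ℝ), GoodFamily μ X →
        Deltan μ X ≤
          C * (|Mn μ X 1| +
            sSup ((fun z => max z 1 * Lnn μ X z) '' Set.Ioo (0 : ℝ) 1))) :
    sSup ((fun p => (Phi (Real.sqrt ((1 - p) / p)) - (1 - p)) /
        (1 + Real.sqrt ((1 - p) ^ 3 / p))) '' Set.Ioo (1/2 : ℝ) 1) ≤ C ∧
    0.5370 < C := by
  have hC : IsRozovskiiConstant C := h
  refine ⟨csSup_le ((nonempty_Ioo.2 (by norm_num)).image _) ?_,
    lt_rozovskiiRatio_at_0_9678.trans_le (hC.rozovskiiRatio_le (by norm_num))⟩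
  rintro _ ⟨p, hp, rfl⟩
  exact hC.rozovskiiRatio_le hp

theorem lower_bound_optimistic_rozovskii_1_1 (C : ℝ) (hC : 0 ≤ C)
    (h : ∀ (Ω : Type) (mΩ : MeasurableSpace Ω) (μ : Measure Ω), IsProbabilityMeasure μ →
      ∀ (n : ℕ) (X : Fin n → Ω → ℝ), GoodFamily μ X →
        Deltan μ X ≤
          C * (|Mn μ X 1| +
            sSup ((fun z => max z 1 * Lnn μ X z) '' Set.Ioo (0 : ℝ) 1))) :
    sSup ((fun p => (Phi (Real.sqrt ((1 - p) / p)) - (1 - p)) /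
        (1 + Real.sqrt ((1 - p) ^ 3 / p))) '' Set.Ioo (1/2 : ℝ) 1) ≤ C ∧
    0.5370 < C :=
  lower_bound_optimistic_rozovskii_1_1_general C h
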